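/- arXiv:2506.19323 — 3 statements merged into one kernel-verified Lean document; each statement's English description precedes it below -/
import Mathlib

section
/- Let Ω ⊆ ℝ^N be a bounded open set, A ⊆ Ω open with Lipschitz boundary, a > 0, and let s_a ∈ H¹₀(Ω)^N be the unique weak solution of a∫_Ω (∇s_a : ∇φ) dx + ∫_{Ω\A} (s_a, φ) dx = ∫_{∂A} (n, φ) dσ for all φ ∈ H¹₀(Ω)^N, where n is the outward unit normal and σ the surface measure of ∂A. Then ‖a s_a‖_{H¹₀(Ω)^N} ≤ C₂ := √(Area(∂A)) · C₁, where C₁ is a trace constant with ‖φ‖_{L²(∂A)^N} ≤ C₁‖φ‖_{H¹₀(Ω)^N}. Moreover ‖a s_a‖²_{H¹₀} + ‖√a s_a‖²_{L²(Ω\A)} ≤ C₂². -/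
open scoped RealInnerProductSpace

/-- Energy estimates for the Yamada equation.  The Hilbert space `V` stands for
`H¹₀(Ω)^N` with inner product `∫_Ω (∇φ : ∇ψ) dx`, `L` stands for `L²(Ω\A)^N` with
`J : V → L` the restriction map (so `⟪J s, J φ⟫ = ∫_{Ω\A}(s,φ) dx`), `W` stands for
`L²(∂A)^N` with `T : V → W` the trace operator, `n ∈ W` is the outward unit normal
(so `‖n‖ = √Area(∂A)`), and `C₁` is the trace constant.  If `s = s_a` solves the weak
form `a⟪s,φ⟫_V + ⟪J s, J φ⟫_L = ⟪n, T φ⟫_W` for all `φ ∈ V`, then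
`‖a s‖ ≤ C₂ := √Area · C₁` and `‖a s‖² + ‖√a s‖²_{L²(Ω\A)} ≤ C₂²`. -/
theorem stmt_7 {V L W : Type*}
    [NormedAddCommGroup V] [InnerProductSpace ℝ V] [CompleteSpace V]
    [NormedAddCommGroup L] [InnerProductSpace ℝ L]
    [NormedAddCommGroup W] [InnerProductSpace ℝ W]
    (J : V →L[ℝ] L) (T : V →L[ℝ] W)
    (C₁ Area : ℝ) (hC₁ : 0 ≤ C₁) (hArea : 0 ≤ Area)
    (hT : ∀ φ : V, ‖T φ‖ ≤ C₁ * ‖φ‖)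
    (n : W) (hn : ‖n‖ = Real.sqrt Area)
    (a : ℝ) (ha : 0 < a) (s : V)
    (hs : ∀ φ : V, a * ⟪s, φ⟫ + ⟪J s, J φ⟫ = ⟪n, T φ⟫) :
    ‖a • s‖ ≤ Real.sqrt Area * C₁ ∧
      ‖a • s‖ ^ 2 + ‖Real.sqrt a • J s‖ ^ 2 ≤ (Real.sqrt Area * C₁) ^ 2 := by
  set C₂ := Real.sqrt Area * C₁ with hC₂
  have hC₂0 : 0 ≤ C₂ := mul_nonneg (Real.sqrt_nonneg _) hC₁
  have key : a * ‖s‖ ^ 2 + ‖J s‖ ^ 2 ≤ C₂ * ‖s‖ := by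
    have h := hs s
    rw [real_inner_self_eq_norm_sq, real_inner_self_eq_norm_sq] at h
    calc a * ‖s‖ ^ 2 + ‖J s‖ ^ 2 = ⟪n, T s⟫ := h
      _ ≤ ‖n‖ * ‖T s‖ := real_inner_le_norm n (T s)
      _ ≤ Real.sqrt Area * (C₁ * ‖s‖) := by
          rw [hn]; exact mul_le_mul_of_nonneg_left (hT s) (Real.sqrt_nonneg _)
      _ = C₂ * ‖s‖ := by ring
  have hnas : ‖a • s‖ = a * ‖s‖ := by
    rw [norm_smul, Real.norm_of_nonneg ha.le]
  have key2 : ‖a • s‖ ^ 2 + a * ‖J s‖ ^ 2 ≤ C₂ * ‖a • s‖ := by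
    have := mul_le_mul_of_nonneg_left key ha.le
    rw [hnas]; nlinarith
  have h1 : ‖a • s‖ ≤ C₂ := by
    nlinarith [sq_nonneg ‖J s‖, mul_nonneg ha.le (sq_nonneg ‖J s‖), norm_nonneg (a • s)]
  refine ⟨h1, ?_⟩
  have hsa : ‖Real.sqrt a • J s‖ ^ 2 = a * ‖J s‖ ^ 2 := by
    rw [norm_smul, Real.norm_of_nonneg (Real.sqrt_nonneg _), mul_pow,
      Real.sq_sqrt ha.le]
  rw [hsa]
  calc ‖a • s‖ ^ 2 + a * ‖J s‖ ^ 2 ≤ C₂ * ‖a • s‖ := key2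
    _ ≤ C₂ * C₂ := mul_le_mul_of_nonneg_left h1 hC₂0
    _ = C₂ ^ 2 := (sq C₂).symm
end

section
/- Under the hypotheses of the Yamada equation (with a ∫_Ω (∇s_a : ∇φ) dx + ∫_{Ω\A}(s_a, φ) dx = ∫_{∂A}(n, φ) dσ for all φ ∈ H¹₀(Ω)^N), the family a s_a converges to 0 weakly in H¹₀(Ω)^N as a → 0⁺; equivalently, lim_{a→0⁺} ∫_{Ω\A} (s_a, φ) dx = ∫_{∂A} (n, φ) dσ for every φ ∈ H¹₀(Ω)^N. -/
open Filter Set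
open scoped RealInnerProductSpace Topology

/-- Weak convergence for the Yamada equation.  With the same abstract setting as before
(`V = H¹₀(Ω)^N`, `J : V → L²(Ω\A)^N` the restriction, `T : V → L²(∂A)^N` the bounded
trace operator with `J w = 0 → T w = 0`, `n` the outward unit normal with
`‖n‖ = √Area(∂A)`), if `s a` solves the weak form
`a⟪s a,φ⟫ + ⟪J (s a), J φ⟫ = ⟪n, T φ⟫` for each `a > 0`, then as `a → 0⁺`,
`∫_{Ω\A}(s_a,φ) → ∫_{∂A}(n,φ)` for every `φ`, i.e. `a • s a ⇀ 0` weakly in `V`. -/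
theorem stmt_8 {V L W : Type*}
    [NormedAddCommGroup V] [InnerProductSpace ℝ V] [CompleteSpace V]
    [NormedAddCommGroup L] [InnerProductSpace ℝ L]
    [NormedAddCommGroup W] [InnerProductSpace ℝ W]
    (J : V →L[ℝ] L) (T : V →L[ℝ] W)
    (C₁ Area : ℝ) (hC₁ : 0 ≤ C₁) (hArea : 0 ≤ Area)
    (hT : ∀ φ : V, ‖T φ‖ ≤ C₁ * ‖φ‖)
    (hJT : ∀ w : V, J w = 0 → T w = 0)
    (n : W) (hn : ‖n‖ = Real.sqrt Area)
    (s : ℝ → V)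
    (hs : ∀ a : ℝ, 0 < a → ∀ φ : V,
      a * ⟪s a, φ⟫ + ⟪J (s a), J φ⟫ = ⟪n, T φ⟫) :
    (∀ φ : V, Tendsto (fun a => ⟪J (s a), J φ⟫) (𝓝[>] (0 : ℝ)) (𝓝 ⟪n, T φ⟫)) ∧
      (∀ φ : V, Tendsto (fun a => ⟪a • s a, φ⟫) (𝓝[>] (0 : ℝ)) (𝓝 (0 : ℝ))) := by
  set M : ℝ := ‖n‖ * C₁ with hM
  have hM0 : 0 ≤ M := mul_nonneg (norm_nonneg n) hC₁
  -- basic estimate from testing with s a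
  have hbase : ∀ a : ℝ, 0 < a →
      a * ‖s a‖ ^ 2 + ‖J (s a)‖ ^ 2 ≤ M * ‖s a‖ := by
    intro a ha
    have h := hs a ha (s a)
    have h1 : ⟪s a, s a⟫ = ‖s a‖ ^ 2 := real_inner_self_eq_norm_sq _
    have h2 : ⟪J (s a), J (s a)⟫ = ‖J (s a)‖ ^ 2 := real_inner_self_eq_norm_sq _
    have h3 : ⟪n, T (s a)⟫ ≤ ‖n‖ * ‖T (s a)‖ := real_inner_le_norm _ _
    have h4 : ‖n‖ * ‖T (s a)‖ ≤ ‖n‖ * (C₁ * ‖s a‖) :=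
      mul_le_mul_of_nonneg_left (hT _) (norm_nonneg n)
    have h5 : M * ‖s a‖ = ‖n‖ * (C₁ * ‖s a‖) := by rw [hM]; ring
    rw [h1, h2] at h
    linarith
  have hbound : ∀ a : ℝ, 0 < a → a * ‖s a‖ ≤ M := by
    intro a ha
    rcases eq_or_lt_of_le (norm_nonneg (s a)) with h0 | h0
    · rw [← h0]; simpa using hM0
    · have := hbase a ha
      nlinarith [sq_nonneg ‖J (s a)‖]
  have hubound : ∀ a : ℝ, 0 < a → ‖a • s a‖ ≤ M := by
    intro a ha
    rw [norm_smul, Real.norm_eq_abs, abs_of_pos ha]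
    exact hbound a ha
  -- strong convergence of J (a • s a)
  have hJsq : ∀ a : ℝ, 0 < a → ‖J (a • s a)‖ ^ 2 ≤ a * M ^ 2 := by
    intro a ha
    have h1 : ‖J (s a)‖ ^ 2 ≤ M * ‖s a‖ := by
      have := hbase a ha
      nlinarith [sq_nonneg ‖s a‖, ha.le]
    have h2 : ‖J (a • s a)‖ = a * ‖J (s a)‖ := by
      rw [map_smul, norm_smul, Real.norm_eq_abs, abs_of_pos ha]
    have h3 := hbound a ha
    rw [h2]
    nlinarith [mul_le_mul_of_nonneg_left h1 (sq_nonneg a),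
      mul_le_mul_of_nonneg_left h3 (mul_nonneg ha.le hM0)]
  have hJnorm : ∀ a : ℝ, 0 < a → ‖J (a • s a)‖ ≤ Real.sqrt (a * M ^ 2) := by
    intro a ha
    rw [← Real.sqrt_sq (norm_nonneg (J (a • s a)))]
    exact Real.sqrt_le_sqrt (hJsq a ha)
  have hsqrt0 : Tendsto (fun a : ℝ => Real.sqrt (a * M ^ 2)) (𝓝[>] (0 : ℝ)) (𝓝 0) := by
    have : Tendsto (fun a : ℝ => Real.sqrt (a * M ^ 2)) (𝓝 (0 : ℝ)) (𝓝 0) := by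
      have hc : Continuous (fun a : ℝ => Real.sqrt (a * M ^ 2)) :=
        Real.continuous_sqrt.comp (continuous_id.mul continuous_const)
      have h := hc.tendsto 0
      simpa using h
    exact this.mono_left nhdsWithin_le_nhds
  -- vanishing on the kernel of J
  have hker : ∀ a : ℝ, 0 < a → ∀ w : V, J w = 0 → ⟪a • s a, w⟫ = 0 := by
    intro a ha w hw
    have h := hs a ha w
    rw [hw, hJT w hw] at h
    simp only [inner_zero_right] at h
    rw [real_inner_smul_left]
    linarith
  -- the Riesz adjoint of J
  set Jstar : L → V := fun ψ =>
    (InnerProductSpace.toDual ℝ V).symm ((innerSL ℝ ψ).comp J) with hJstar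
  have hJstar_apply : ∀ (ψ : L) (v : V), ⟪Jstar ψ, v⟫ = ⟪ψ, J v⟫ := by
    intro ψ v
    rw [hJstar]
    exact InnerProductSpace.toDual_symm_apply
  set K : Submodule ℝ V :=
    Submodule.span ℝ ({v : V | J v = 0} ∪ Set.range Jstar) with hK
  -- density
  have hdense : K.topologicalClosure = ⊤ := by
    rw [Submodule.topologicalClosure_eq_top_iff]
    rw [Submodule.eq_bot_iff]
    intro v hv
    rw [Submodule.mem_orthogonal] at hv
    have hJv : J v = 0 := by
      have h1 : ⟪Jstar (J v), v⟫ = 0 :=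
        hv _ (Submodule.subset_span (Or.inr ⟨J v, rfl⟩))
      rw [hJstar_apply] at h1
      exact inner_self_eq_zero.mp h1
    have h2 : ⟪v, v⟫ = 0 := hv v (Submodule.subset_span (Or.inl hJv))
    exact inner_self_eq_zero.mp h2
  -- convergence against elements of K
  have hKconv : ∀ v ∈ K, Tendsto (fun a : ℝ => ⟪a • s a, v⟫) (𝓝[>] (0 : ℝ)) (𝓝 0) := by
    intro v hv
    induction hv using Submodule.span_induction with
    | mem x hx =>
      rcases hx with hx | ⟨ψ, rfl⟩
      · have : (fun a : ℝ => ⟪a • s a, x⟫) =ᶠ[𝓝[>] (0 : ℝ)] fun _ => (0 : ℝ) := by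
          filter_upwards [self_mem_nhdsWithin] with a ha
          exact hker a ha x hx
        rw [tendsto_congr' this]
        exact tendsto_const_nhds
      · apply squeeze_zero_norm' (a := fun b => Real.sqrt (b * M ^ 2) * ‖ψ‖)
        · filter_upwards [self_mem_nhdsWithin] with a ha
          have : ⟪a • s a, Jstar ψ⟫ = ⟪ψ, J (a • s a)⟫ := by
            rw [real_inner_comm, hJstar_apply]
          rw [this]
          calc ‖⟪ψ, J (a • s a)⟫‖ ≤ ‖ψ‖ * ‖J (a • s a)‖ := norm_inner_le_norm _ _
            _ ≤ ‖ψ‖ * Real.sqrt (a * M ^ 2) :=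
                mul_le_mul_of_nonneg_left (hJnorm a ha) (norm_nonneg ψ)
            _ = Real.sqrt (a * M ^ 2) * ‖ψ‖ := mul_comm _ _
        · simpa using hsqrt0.mul_const ‖ψ‖
    | zero => simpa using (tendsto_const_nhds : Tendsto (fun _ : ℝ => (0:ℝ)) _ _)
    | add x y hx hy ihx ihy =>
      have := ihx.add ihy
      simp only [add_zero] at this
      refine this.congr fun a => ?_
      rw [inner_add_right]
    | smul c x hx ih =>
      have := ih.const_mul c
      simp only [mul_zero] at this
      refine this.congr fun a => ?_
      rw [real_inner_smul_right]
  -- main weak convergence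
  have key : ∀ φ : V, Tendsto (fun a : ℝ => ⟪a • s a, φ⟫) (𝓝[>] (0 : ℝ)) (𝓝 0) := by
    intro φ
    rw [NormedAddCommGroup.tendsto_nhds_zero]
    intro ε hε
    have hφ : φ ∈ closure (K : Set V) := by
      have : φ ∈ K.topologicalClosure := by rw [hdense]; trivial
      rwa [← Submodule.topologicalClosure_coe]
    have hδ : 0 < ε / (2 * (M + 1)) := by positivity
    rcases Metric.mem_closure_iff.mp hφ _ hδ with ⟨v, hvK, hvd⟩
    have hvd' : ‖φ - v‖ < ε / (2 * (M + 1)) := by rwa [← dist_eq_norm]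
    have h1 := (hKconv v hvK).eventually (eventually_abs_sub_lt 0 (half_pos hε))
    filter_upwards [h1, self_mem_nhdsWithin] with a ha1 ha2
    have hsplit : ⟪a • s a, φ⟫ = ⟪a • s a, v⟫ + ⟪a • s a, φ - v⟫ := by
      rw [← inner_add_right]
      congr 1
      abel
    rw [hsplit]
    have h2 : ‖⟪a • s a, φ - v⟫‖ ≤ M * (ε / (2 * (M + 1))) := by
      calc ‖⟪a • s a, φ - v⟫‖ ≤ ‖a • s a‖ * ‖φ - v‖ := norm_inner_le_norm _ _
        _ ≤ M * (ε / (2 * (M + 1))) :=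
            mul_le_mul (hubound a ha2) hvd'.le (norm_nonneg _) hM0
    have h3 : ‖⟪a • s a, v⟫‖ < ε / 2 := by
      simpa [Real.norm_eq_abs, abs_sub_comm] using ha1
    have hM1 : (0:ℝ) < M + 1 := by linarith
    have h4 : M * (ε / (2 * (M + 1))) < ε / 2 := by
      have he : (M + 1) * (ε / (2 * (M + 1))) = ε / 2 := by
        field_simp [hM1.ne']
      calc M * (ε / (2 * (M + 1))) < (M + 1) * (ε / (2 * (M + 1))) :=
            mul_lt_mul_of_pos_right (lt_add_one M) hδ
        _ = ε / 2 := he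
    calc ‖⟪a • s a, v⟫ + ⟪a • s a, φ - v⟫‖
        ≤ ‖⟪a • s a, v⟫‖ + ‖⟪a • s a, φ - v⟫‖ := norm_add_le _ _
      _ < ε / 2 + ε / 2 := by linarith
      _ = ε := by ring
  refine ⟨fun φ => ?_, key⟩
  have heq : (fun a : ℝ => ⟪J (s a), J φ⟫) =ᶠ[𝓝[>] (0 : ℝ)]
      fun a => ⟪n, T φ⟫ - ⟪a • s a, φ⟫ := by
    filter_upwards [self_mem_nhdsWithin] with a ha
    have h := hs a ha φ
    rw [real_inner_smul_left]
    linarith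
  rw [tendsto_congr' heq]
  have h0 := ((tendsto_const_nhds : Tendsto (fun _ : ℝ => ⟪n, T φ⟫) (𝓝[>] (0:ℝ)) (𝓝 ⟪n, T φ⟫)).sub (key φ))
  simpa using h0
end

section
/- Let A ⊆ ℝ² be an open set such that A ∩ B_ε(0) = {(x₁,x₂) : x₁ > 0, 0 < x₂ < x₁^{1+α}} ∩ B_ε(0) for some ε, α > 0. Then with U_t = {z ∈ A : ‖z‖ ≤ √t R(t)} and R(t) = log(1/t), one has t^{-1}|U_t| = O(t^{α/2} R(t)^{2+α}) → 0 as t → 0⁺; in particular the empty cone is an approximating cone of A at the origin. -/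
open MeasureTheory Filter Set
open scoped Topology

lemma rect_vol (r b : ℝ) :
    volume {x : EuclideanSpace ℝ (Fin 2) | x 0 ∈ Set.Ioc 0 r ∧ x 1 ∈ Set.Ioo 0 b}
      = ENNReal.ofReal r * ENNReal.ofReal b := by
  have hmp := EuclideanSpace.volume_preserving_symm_measurableEquiv_toLp (ι := Fin 2)
  set S : Set (Fin 2 → ℝ) := Set.univ.pi fun i => if i = 0 then Set.Ioc 0 r else Set.Ioo 0 b
  have hS : MeasurableSet S := by
    apply MeasurableSet.univ_pi
    intro i
    by_cases h : i = 0 <;> simp [h]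
  have hpre : (MeasurableEquiv.toLp 2 (Fin 2 → ℝ)).symm ⁻¹' S
      = {x : EuclideanSpace ℝ (Fin 2) | x 0 ∈ Set.Ioc 0 r ∧ x 1 ∈ Set.Ioo 0 b} := by
    ext x
    simp only [Set.mem_preimage, S, Set.mem_pi, Set.mem_univ, forall_true_left, Set.mem_setOf_eq]
    constructor
    · intro h
      have h0 := h 0
      have h1 := h 1
      simp only [if_pos rfl] at h0
      norm_num at h1
      exact ⟨h0, h1⟩
    · intro h i
      fin_cases i
      · simpa using h.1
      · simpa using h.2
  rw [← hpre, hmp.measure_preimage hS.nullMeasurableSet]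
  rw [volume_pi_pi]
  rw [Fin.prod_univ_two]
  norm_num [Real.volume_Ioc, Real.volume_Ioo]

/-- Cusp example: if `A ∩ B_ε(0) = {(x₁,x₂) : x₁ > 0, 0 < x₂ < x₁^{1+α}} ∩ B_ε(0)` in
`ℝ²`, then with `U_t = {z ∈ A : ‖z‖ ≤ √t log(1/t)}` one has
`t⁻¹|U_t| = O(t^{α/2} (log(1/t))^{2+α}) → 0` as `t → 0⁺`; hence the empty cone is an
approximating cone of `A` at the origin. -/
theorem stmt_16 (α ε : ℝ) (hα : 0 < α) (hε : 0 < ε)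
    (A : Set (EuclideanSpace ℝ (Fin 2))) (hAo : IsOpen A)
    (hA : A ∩ Metric.ball (0 : EuclideanSpace ℝ (Fin 2)) ε
      = {x : EuclideanSpace ℝ (Fin 2) | 0 < x 0 ∧ 0 < x 1 ∧ x 1 < (x 0) ^ (1 + α)}
          ∩ Metric.ball (0 : EuclideanSpace ℝ (Fin 2)) ε)
    (U : ℝ → Set (EuclideanSpace ℝ (Fin 2)))
    (hU : ∀ t, U t = {z ∈ A | ‖z‖ ≤ Real.sqrt t * Real.log (1 / t)}) :
    (∃ C > (0 : ℝ), ∃ t₀ > (0 : ℝ), ∀ t : ℝ, 0 < t → t < t₀ →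
        t⁻¹ * (volume (U t)).toReal
          ≤ C * t ^ (α / 2) * (Real.log (1 / t)) ^ (2 + α)) ∧
      Tendsto (fun t => t⁻¹ * (volume (U t)).toReal) (𝓝[>] (0 : ℝ)) (𝓝 0) := by
  -- the radius function r t = √t log(1/t) tends to 0
  have hrt : Tendsto (fun t => Real.sqrt t * Real.log (1 / t)) (𝓝[>] (0:ℝ)) (𝓝 0) := by
    have h := tendsto_log_mul_rpow_nhdsGT_zero (one_half_pos (α := ℝ))
    have : Tendsto (fun t : ℝ => -(Real.log t * t ^ (1/2 : ℝ))) (𝓝[>] (0:ℝ)) (𝓝 0) := by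
      simpa using h.neg
    refine this.congr' ?_
    filter_upwards [self_mem_nhdsWithin] with t (ht : 0 < t)
    rw [Real.sqrt_eq_rpow, Real.log_div one_ne_zero ht.ne', Real.log_one]
    ring
  -- choose t₀ with the needed smallness
  have hev : ∀ᶠ t in 𝓝[>] (0:ℝ), Real.sqrt t * Real.log (1 / t) < ε ∧ t < 1 := by
    filter_upwards [hrt.eventually (eventually_lt_nhds hε) ,
      eventually_nhdsWithin_of_eventually_nhds (eventually_lt_nhds one_pos)] with t h1 h2
    exact ⟨h1, h2⟩
  obtain ⟨t₀, ht₀, hIoo⟩ := (mem_nhdsGT_iff_exists_Ioo_subset).1 hev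
  -- the key pointwise bound
  have key : ∀ t : ℝ, 0 < t → t < t₀ →
      t⁻¹ * (volume (U t)).toReal ≤ t ^ (α / 2) * (Real.log (1 / t)) ^ (2 + α) := by
    intro t htpos htlt
    obtain ⟨hrε, ht1⟩ := hIoo ⟨htpos, htlt⟩
    set r := Real.sqrt t * Real.log (1 / t) with hr
    have hL : 0 < Real.log (1 / t) := Real.log_pos (by rw [one_div]; exact (one_lt_inv₀ htpos).2 ht1)
    have hrpos : 0 < r := mul_pos (Real.sqrt_pos.2 htpos) hL
    -- U t is contained in the rectangle (0, r] × (0, r^(1+α))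
    have hsub : U t ⊆ {x : EuclideanSpace ℝ (Fin 2) |
        x 0 ∈ Set.Ioc 0 r ∧ x 1 ∈ Set.Ioo 0 (r ^ (1 + α))} := by
      intro z hz
      rw [hU] at hz
      obtain ⟨hzA, hzn⟩ := hz
      have hzb : z ∈ Metric.ball (0 : EuclideanSpace ℝ (Fin 2)) ε := by
        rw [Metric.mem_ball, dist_zero_right]
        exact lt_of_le_of_lt hzn hrε
      have hzc : 0 < z 0 ∧ 0 < z 1 ∧ z 1 < (z 0) ^ (1 + α) := by
        have := hA ▸ Set.mem_inter hzA hzb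
        exact this.1
      obtain ⟨h0, h1, h2⟩ := hzc
      have habs : |z 0| ≤ ‖z‖ := by
        rw [EuclideanSpace.norm_eq]
        rw [← Real.sqrt_sq_eq_abs]
        apply Real.sqrt_le_sqrt
        rw [Fin.sum_univ_two]
        have : (0:ℝ) ≤ ‖z 1‖ ^ 2 := sq_nonneg _
        simp only [Real.norm_eq_abs, sq_abs]
        nlinarith
      have hz0r : z 0 ≤ r := le_trans (le_trans (le_abs_self _) habs) hzn
      refine ⟨⟨h0, hz0r⟩, h1, lt_of_lt_of_le h2 ?_⟩
      exact Real.rpow_le_rpow h0.le hz0r (by linarith)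
    -- volume bound
    have hvol : (volume (U t)).toReal ≤ r ^ ((2:ℝ) + α) := by
      have h1 : volume (U t) ≤ ENNReal.ofReal r * ENNReal.ofReal (r ^ (1 + α)) := by
        rw [← rect_vol]; exact measure_mono hsub
      have h2 : ENNReal.ofReal r * ENNReal.ofReal (r ^ (1 + α))
          = ENNReal.ofReal (r ^ ((2:ℝ) + α)) := by
        rw [← ENNReal.ofReal_mul hrpos.le]
        congr 1
        rw [show (2:ℝ) + α = 1 + (1 + α) by ring, Real.rpow_add hrpos 1 (1+α), Real.rpow_one]
      exact ENNReal.toReal_le_of_le_ofReal (Real.rpow_nonneg hrpos.le _) (h2 ▸ h1)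
    -- arithmetic
    calc t⁻¹ * (volume (U t)).toReal ≤ t⁻¹ * r ^ ((2:ℝ) + α) := by
          apply mul_le_mul_of_nonneg_left hvol (by positivity)
      _ = t ^ (α / 2) * (Real.log (1 / t)) ^ (2 + α) := by
          rw [hr, Real.mul_rpow (Real.sqrt_nonneg t) hL.le,
            Real.sqrt_eq_rpow, ← Real.rpow_mul htpos.le]
          rw [show (1/2 : ℝ) * ((2:ℝ) + α) = 1 + α/2 by ring]
          rw [Real.rpow_add htpos, Real.rpow_one]
          field_simp
  constructor
  · exact ⟨1, one_pos, t₀, ht₀, fun t ht ht' => by simpa using key t ht ht'⟩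
  · -- squeeze
    have hg : Tendsto (fun t : ℝ => t ^ (α / 2) * (Real.log (1 / t)) ^ (2 + α))
        (𝓝[>] (0:ℝ)) (𝓝 0) := by
      have h := (isLittleO_abs_log_rpow_rpow_nhdsGT_zero (2 + α)
        (by linarith : -(α/2) < 0)).tendsto_div_nhds_zero
      refine h.congr' ?_
      filter_upwards [self_mem_nhdsWithin,
        Ioo_mem_nhdsGT_of_mem (Set.left_mem_Ico.2 one_pos)] with t (ht : 0 < t) ht1
      rw [Real.rpow_neg ht.le, div_inv_eq_mul]
      rw [Real.log_div one_ne_zero ht.ne', Real.log_one, zero_sub,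
        abs_of_nonpos (Real.log_nonpos ht.le ht1.2.le)]
      ring
    apply squeeze_zero'
    · filter_upwards [self_mem_nhdsWithin] with t (ht : 0 < t)
      positivity
    · filter_upwards [self_mem_nhdsWithin, Ioo_mem_nhdsGT_of_mem (Set.left_mem_Ico.2 ht₀)]
        with t (ht : 0 < t) ht'
      exact key t ht ht'.2
    · exact hg
end
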